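/- Let (A,≺,≻,ω) be a quadratic anti-pre-Novikov algebra and P: A → A a linear map such that (A,≻,≺,P,ω) is a quadratic Rota-Baxter anti-pre-Novikov algebra of weight λ (i.e. P is a Rota-Baxter operator of weight λ and ω(P(x),y) + ω(x,P(y)) + λω(x,y) = 0 for all x,y). Then (A,≻,≺, −λ·Id − P, ω) is also a quadratic Rota-Baxter anti-pre-Novikov algebra of weight λ. -/

import Mathlib

def APNAxioms {A : Type*} [AddCommGroup A] (succ prec : A → A → A) : Prop :=
  (∀ x y z : A, succ ((succ x y + prec x y) - (succ y x + prec y x)) z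
      = succ y (succ x z) - succ x (succ y z)) ∧
  (∀ x y z : A, prec x (succ y z + prec y z)
      = prec (succ y x) z - prec (prec x y) z - succ y (prec x z)) ∧
  (∀ x y z : A, succ (succ x y + prec x y) z = -(prec (succ x z) y)) ∧
  (∀ x y z : A, prec (prec x y) z = prec (prec x z) y) ∧
  (∀ x y z : A, prec ((succ x y + prec x y) - (succ y x + prec y x)) z
      = succ x (succ y z + prec y z) - succ y (succ x z + prec x z))
def IsRBAPN {k A : Type*} [Field k] [AddCommGroup A] [Module k A]
    (succ prec : A →ₗ[k] A →ₗ[k] A) (lam : k) (P : A →ₗ[k] A) : Prop :=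
  (∀ x y : A, prec (P x) (P y) = P (prec (P x) y + prec x (P y) + lam • prec x y)) ∧
  (∀ x y : A, succ (P x) (P y) = P (succ (P x) y + succ x (P y) + lam • succ x y))

/-!
Both conditions are invariant under `P ↦ -λ·id - P`: expanding the Rota–Baxter identity for
`-λ·id - P` by bilinearity gives back the identity for `P`, and the compatibility expression of
`-λ·id - P` with `ω` is the negative of that of `P`.
-/

section

variable {R A : Type*} [CommRing R] [AddCommGroup A] [Module R A]

theorem rotaBaxter_neg_smul_id_sub {μ : A →ₗ[R] A →ₗ[R] A} {lam : R} {P : A →ₗ[R] A}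
    (hP : ∀ x y : A, μ (P x) (P y) = P (μ (P x) y + μ x (P y) + lam • μ x y)) (x y : A) :
    μ ((-(lam • (LinearMap.id : A →ₗ[R] A)) - P) x)
        ((-(lam • (LinearMap.id : A →ₗ[R] A)) - P) y)
      = (-(lam • (LinearMap.id : A →ₗ[R] A)) - P)
          (μ ((-(lam • (LinearMap.id : A →ₗ[R] A)) - P) x) y
            + μ x ((-(lam • (LinearMap.id : A →ₗ[R] A)) - P) y) + lam • μ x y) := by
  have h := hP x y
  simp only [LinearMap.sub_apply, LinearMap.neg_apply, LinearMap.smul_apply,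
    LinearMap.id_coe, id_eq, map_sub, map_neg, map_smul, map_add] at h ⊢
  rw [h]
  module

theorem bilin_compat_neg_smul_id_sub {ω : A →ₗ[R] A →ₗ[R] R} {lam : R} {P : A →ₗ[R] A}
    (hP : ∀ x y : A, ω (P x) y + ω x (P y) + lam * ω x y = 0) (x y : A) :
    ω ((-(lam • (LinearMap.id : A →ₗ[R] A)) - P) x) y
      + ω x ((-(lam • (LinearMap.id : A →ₗ[R] A)) - P) y) + lam * ω x y = 0 := by
  simp only [LinearMap.sub_apply, LinearMap.neg_apply, LinearMap.smul_apply,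
    LinearMap.id_coe, id_eq, map_sub, map_neg, map_smul, smul_eq_mul]
  linear_combination -hP x y

end

theorem IsRBAPN.neg_smul_id_sub {k A : Type*} [Field k] [AddCommGroup A] [Module k A]
    {succ prec : A →ₗ[k] A →ₗ[k] A} {lam : k} {P : A →ₗ[k] A}
    (hP : IsRBAPN succ prec lam P) :
    IsRBAPN succ prec lam (-(lam • (LinearMap.id : A →ₗ[k] A)) - P) :=
  ⟨rotaBaxter_neg_smul_id_sub hP.1, rotaBaxter_neg_smul_id_sub hP.2⟩

theorem stmt18_general {k A : Type*} [Field k] [AddCommGroup A] [Module k A]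
    (succ prec : A →ₗ[k] A →ₗ[k] A)
    (ω : A →ₗ[k] A →ₗ[k] k)
    (lam : k) (P : A →ₗ[k] A)
    (hRB : IsRBAPN succ prec lam P)
    (hcompat : ∀ x y : A, ω (P x) y + ω x (P y) + lam * ω x y = 0) :
    IsRBAPN succ prec lam (-(lam • (LinearMap.id : A →ₗ[k] A)) - P) ∧
    (∀ x y : A,
      ω ((-(lam • (LinearMap.id : A →ₗ[k] A)) - P) x) y
        + ω x ((-(lam • (LinearMap.id : A →ₗ[k] A)) - P) y)
        + lam * ω x y = 0) :=
  ⟨hRB.neg_smul_id_sub, bilin_compat_neg_smul_id_sub hcompat⟩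

theorem stmt18 {k A : Type*} [Field k] [AddCommGroup A] [Module k A]
    (succ prec : A →ₗ[k] A →ₗ[k] A)
    (hAPN : APNAxioms (fun x y => succ x y) (fun x y => prec x y))
    (ω : A →ₗ[k] A →ₗ[k] k)
    (hsym : ∀ x y : A, ω x y = ω y x)
    (hnd : ∀ x : A, (∀ y : A, ω x y = 0) → x = 0)
    (hinv1 : ∀ x y z : A, ω (prec x y) z = -(ω x (succ z y + prec z y)))
    (hinv2 : ∀ x y z : A, ω (succ x y) z
        = ω ((succ x z + prec x z) + (succ z x + prec z x)) y)
    (lam : k) (P : A →ₗ[k] A)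
    (hRB : IsRBAPN succ prec lam P)
    (hcompat : ∀ x y : A, ω (P x) y + ω x (P y) + lam * ω x y = 0) :
    IsRBAPN succ prec lam (-(lam • (LinearMap.id : A →ₗ[k] A)) - P) ∧
    (∀ x y : A,
      ω ((-(lam • (LinearMap.id : A →ₗ[k] A)) - P) x) y
        + ω x ((-(lam • (LinearMap.id : A →ₗ[k] A)) - P) y)
        + lam * ω x y = 0) :=
  stmt18_general succ prec ω lam P hRB hcompat
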